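/- Lower bound on LP size in EHD Step 4: the set B^S ∪ extB^S contains the entire frame F of A; hence |B^S ∪ extB^S| ≥ |F|, so every LP solved in Step 4 has at least |F| structural variables. -/

import Mathlib

open scoped Classical
open Finset

noncomputable section

/-- The VRS (free-disposal convex) hull of a finite set of points in ℝ^m. -/
def vrs {m : ℕ} (S : Finset (Fin m → ℝ)) : Set (Fin m → ℝ) :=
  {z | ∃ l : (Fin m → ℝ) → ℝ, (∀ a, 0 ≤ l a) ∧ (∑ a ∈ S, l a) = 1 ∧
    ∀ k, z k ≤ ∑ a ∈ S, l a * a k}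

/-- The frame of `A`: the points of `A` that are extreme points of `vrs A`. -/
def frame {m : ℕ} (A : Finset (Fin m → ℝ)) : Finset (Fin m → ℝ) :=
  A.filter fun a => a ∈ Set.extremePoints ℝ (vrs A)

/-!
An extreme point of `vrs A` lying in `A^S` cannot be interior to `vrs A^S ⊆ vrs A`, so it is a
boundary point of `vrs A^S`. An extreme point `a` outside `A^S` cannot lie in `vrs B^S`: it would
lie below a point of `conv B^S ⊆ vrs A`, which must be `a` itself because `vrs A` is a lower set,
and the extreme points of the convex hull of a finite set belong to that set.
-/

theorem IsLowerSet.eq_of_mem_extremePoints_of_le {E : Type*} [AddCommGroup E] [PartialOrder E]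
    [IsOrderedAddMonoid E] [Module ℝ E] {s : Set E} (hs : IsLowerSet s) {x y : E}
    (hx : x ∈ Set.extremePoints ℝ s) (hy : y ∈ s) (hxy : x ≤ y) : y = x := by
  have hlow : x - (y - x) ∈ s := hs (sub_le_self _ (sub_nonneg.2 hxy)) hx.1
  have hup : x + (y - x) ∈ s := by rwa [add_sub_cancel]
  simpa using ((mem_extremePoints.1 hx).2 _ hlow _ hup (mem_openSegment_sub_add x (y - x))).2

section

variable {m : ℕ}

theorem mem_vrs_iff {S : Finset (Fin m → ℝ)} {z : Fin m → ℝ} :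
    z ∈ vrs S ↔ ∃ y ∈ convexHull ℝ (S : Set (Fin m → ℝ)), z ≤ y := by
  simp only [Finset.mem_convexHull']
  constructor
  · rintro ⟨l, hl0, hl1, hz⟩
    exact ⟨_, ⟨l, fun a _ => hl0 a, hl1, rfl⟩, fun k => by simpa [Finset.sum_apply] using hz k⟩
  · rintro ⟨_, ⟨w, hw0, hw1, rfl⟩, hz⟩
    have hsum : ∀ f : (Fin m → ℝ) → ℝ, ∑ a ∈ S, max (w a) 0 * f a = ∑ a ∈ S, w a * f a :=
      fun f => Finset.sum_congr rfl fun a ha => by rw [max_eq_left (hw0 a ha)]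
    refine ⟨fun a => max (w a) 0, fun a => le_max_right _ _, by simpa [hw1] using hsum 1, fun k => ?_⟩
    simpa [hsum, Finset.sum_apply] using hz k

theorem isLowerSet_vrs (S : Finset (Fin m → ℝ)) : IsLowerSet (vrs S) := by
  rintro x z hzx hz
  obtain ⟨y, hy, hzy⟩ := mem_vrs_iff.1 hz
  exact mem_vrs_iff.2 ⟨y, hy, hzx.trans hzy⟩

theorem convexHull_subset_vrs (S : Finset (Fin m → ℝ)) :
    convexHull ℝ (S : Set (Fin m → ℝ)) ⊆ vrs S :=
  fun y hy => mem_vrs_iff.2 ⟨y, hy, le_rfl⟩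

theorem vrs_mono {S T : Finset (Fin m → ℝ)} (h : S ⊆ T) : vrs S ⊆ vrs T := by
  intro z hz
  obtain ⟨y, hy, hzy⟩ := mem_vrs_iff.1 hz
  exact mem_vrs_iff.2 ⟨y, convexHull_mono (by exact_mod_cast h) hy, hzy⟩

theorem mem_of_mem_vrs_of_mem_extremePoints {S T : Finset (Fin m → ℝ)} (hST : S ⊆ T)
    {x : Fin m → ℝ} (hx : x ∈ Set.extremePoints ℝ (vrs T)) (hxS : x ∈ vrs S) : x ∈ S := by
  obtain ⟨y, hy, hxy⟩ := mem_vrs_iff.1 hxS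
  have hyx : y = x := (isLowerSet_vrs T).eq_of_mem_extremePoints_of_le hx
    (vrs_mono hST (convexHull_subset_vrs S hy)) hxy
  subst hyx
  have hhull : convexHull ℝ (S : Set (Fin m → ℝ)) ⊆ vrs T :=
    (convexHull_subset_vrs S).trans (vrs_mono hST)
  exact_mod_cast extremePoints_convexHull_subset
    (inter_extremePoints_subset_extremePoints_of_subset hhull ⟨hy, hx⟩)

theorem mem_frontier_vrs_of_mem_extremePoints (hm : 0 < m) {S T : Finset (Fin m → ℝ)}
    (hST : S ⊆ T) {x : Fin m → ℝ} (hxS : x ∈ S) (hx : x ∈ Set.extremePoints ℝ (vrs T)) :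
    x ∈ frontier (vrs S) := by
  have : Nonempty (Fin m) := ⟨⟨0, hm⟩⟩
  refine ⟨subset_closure (convexHull_subset_vrs S (subset_convexHull ℝ _ hxS)), fun hint => ?_⟩
  exact Set.disjoint_left.1 (disjoint_interior_extremePoints (vrs T))
    (interior_mono (vrs_mono hST) hint) hx

end

theorem stmt18 {m : ℕ} (hm : 0 < m) (A AS : Finset (Fin m → ℝ)) (hAS : AS ⊆ A) :
    frame A ⊆
      (AS.filter fun a => a ∈ frontier (vrs AS)) ∪
      ((A \ AS).filter fun b =>
        b ∉ vrs (AS.filter fun a => a ∈ frontier (vrs AS))) ∧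
    (frame A).card ≤
      ((AS.filter fun a => a ∈ frontier (vrs AS)) ∪
      ((A \ AS).filter fun b =>
        b ∉ vrs (AS.filter fun a => a ∈ frontier (vrs AS)))).card := by
  refine ⟨?frame_subset, card_le_card ?frame_subset⟩
  intro a ha
  obtain ⟨haA, hext⟩ := mem_filter.1 ha
  by_cases haS : a ∈ AS
  · exact mem_union_left _
      (mem_filter.2 ⟨haS, mem_frontier_vrs_of_mem_extremePoints hm hAS haS hext⟩)
  · refine mem_union_right _ (mem_filter.2 ⟨mem_sdiff.2 ⟨haA, haS⟩, fun haB => haS ?_⟩)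
    exact (mem_filter.1 (mem_of_mem_vrs_of_mem_extremePoints
      ((filter_subset _ _).trans hAS) hext haB)).1
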